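/- If f : [0,T) → ℝ is locally Lipschitz with lower Dini derivative at every t at least f(t)(f(t) − ρ), and r : [0,T) → ℝ solves r' = r(r − ρ) with r(0) ≤ f(0), then r(t) ≤ f(t) for all t ∈ [0,T). -/

import Mathlib

/-!
Comparison principle. If `F x` is one-sided `K`-Lipschitz between the solution `r` and `f`, then
for every `ε > 0` the function `r - ε e^{(K+1)x}` is a strict subsolution, so it can never touch
the supersolution `f` from below; letting `ε → 0` gives `r ≤ f`. For the equation `r' = r(r - ρ)`
the constant `K` is an upper bound of `r + f - ρ` on the compact interval `[0, t]`, and the lower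
Dini derivative of the locally Lipschitz `f` is a genuine liminf of slopes bounded from below.
-/

open Set Filter Topology

theorem le_image_of_deriv_boundary_lt_limsup_slope_right {f f' : ℝ → ℝ} {a b : ℝ}
    (hf : ContinuousOn f (Icc a b))
    -- `hf'` says `f' x ≤ limsup (f z - f x) / (z - x)` as `z → x⁺`
    (hf' : ∀ x ∈ Ico a b, ∀ s < f' x, ∃ᶠ z in 𝓝[>] x, s < slope f x z)
    {B B' : ℝ → ℝ} (ha : B a ≤ f a) (hB : ContinuousOn B (Icc a b))
    (hB' : ∀ x ∈ Ico a b, HasDerivWithinAt B (B' x) (Ici x) x)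
    (bound : ∀ x ∈ Ico a b, f x = B x → B' x < f' x) : ∀ ⦃x⦄, x ∈ Icc a b → B x ≤ f x := by
  have hneg_slope : ∀ x ∈ Ico a b, ∀ s, -f' x < s → ∃ᶠ z in 𝓝[>] x, slope (-f) x z < s :=
    fun x hx s hs => (hf' x hx (-s) (by linarith)).mono fun z hz => by
      simp only [slope_neg_fun, Pi.neg_apply]; linarith
  intro x hx
  simpa using image_le_of_liminf_slope_right_lt_deriv_boundary' (B := -B) (B' := -B') hf.neg
    hneg_slope (neg_le_neg ha) hB.neg (fun x hx => (hB' x hx).neg)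
    (fun x hx hfB => neg_lt_neg (bound x hx (neg_inj.1 hfB))) hx

theorem solution_le_of_limsup_slope_right_ge {F : ℝ → ℝ → ℝ} {f r : ℝ → ℝ} {a b K : ℝ}
    (hf : ContinuousOn f (Icc a b))
    (hf' : ∀ x ∈ Ico a b, ∀ s < F x (f x), ∃ᶠ z in 𝓝[>] x, s < slope f x z)
    (hr : ContinuousOn r (Icc a b))
    (hr' : ∀ x ∈ Ico a b, HasDerivWithinAt r (F x (r x)) (Ici x) x)
    (hF : ∀ x ∈ Ico a b, f x < r x → F x (r x) - F x (f x) ≤ K * (r x - f x))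
    (ha : r a ≤ f a) : ∀ ⦃x⦄, x ∈ Icc a b → r x ≤ f x := by
  have hE : ∀ x, HasDerivAt (fun y => Real.exp ((K + 1) * y))
      (Real.exp ((K + 1) * x) * (K + 1)) x := fun x => by
    simpa using ((hasDerivAt_id x).const_mul (K + 1)).exp
  have perturbed : ∀ ε > 0, ∀ x ∈ Icc a b, r x - ε * Real.exp ((K + 1) * x) ≤ f x := by
    intro ε hε
    refine le_image_of_deriv_boundary_lt_limsup_slope_right hf hf' ?_ (by fun_prop)
      (fun x hx => ((hr' x hx).sub ((hE x).const_mul ε).hasDerivWithinAt)) ?_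
    · linarith [mul_pos hε (Real.exp_pos ((K + 1) * a))]
    · intro x hx hfx
      have hδ : r x - f x = ε * Real.exp ((K + 1) * x) := by linarith
      have hδ_pos : 0 < ε * Real.exp ((K + 1) * x) := by positivity
      have := hF x hx (by linarith)
      rw [hδ] at this
      linarith
  intro x hx
  refine le_of_forall_pos_le_add fun δ hδ => ?_
  have hexp := Real.exp_pos ((K + 1) * x)
  have := perturbed (δ / Real.exp ((K + 1) * x)) (by positivity) x hx
  rw [div_mul_cancel₀ _ hexp.ne'] at this
  linarith

theorem liminf_slope_nhdsGT_eq (f : ℝ → ℝ) (x : ℝ) :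
    liminf (fun h => (f (x + h) - f x) / h) (𝓝[>] 0) = liminf (slope f x) (𝓝[>] x) := by
  have : (fun h => (f (x + h) - f x) / h) = slope f x ∘ (x + ·) := by
    ext h; simp [slope_def_field]
  rw [this, liminf_comp, map_add_left_nhdsGT, add_zero]

theorem LocallyLipschitzOn.isBoundedUnder_ge_slope {f : ℝ → ℝ} {s : Set ℝ} {x : ℝ}
    (hf : LocallyLipschitzOn s f) (hx : x ∈ s) (hs : s ∈ 𝓝[>] x) :
    IsBoundedUnder (· ≥ ·) (𝓝[>] x) (slope f x) := by
  obtain ⟨K, u, hu, hK⟩ := hf hx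
  refine ⟨-K, eventually_map.2 ?_⟩
  filter_upwards [nhdsWithin_le_of_mem hs hu, self_mem_nhdsWithin] with z hz (hxz : x < z)
  have hdist := hK.dist_le_mul z hz x (mem_of_mem_nhdsWithin hx hu)
  rw [Real.dist_eq, Real.dist_eq, abs_of_pos (sub_pos.2 hxz)] at hdist
  rw [slope_def_field, ge_iff_le, le_div_iff₀ (sub_pos.2 hxz)]
  linarith [neg_abs_le (f z - f x)]

theorem dini_ode_comparison_general (T ρ : ℝ)
    (f r : ℝ → ℝ)
    (hlip : LocallyLipschitzOn (Set.Ico 0 T) f)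
    (hdini : ∀ t ∈ Set.Ico (0:ℝ) T,
      f t * (f t - ρ) ≤
        Filter.liminf (fun h : ℝ => (f (t + h) - f t) / h)
          (nhdsWithin 0 (Set.Ioi 0)))
    (hr : ∀ t ∈ Set.Ico (0:ℝ) T, HasDerivAt r (r t * (r t - ρ)) t)
    (h0 : r 0 ≤ f 0) :
    ∀ t ∈ Set.Ico (0:ℝ) T, r t ≤ f t := by
  intro t ⟨ht0, htT⟩
  have hsub : Icc 0 t ⊆ Ico 0 T := Icc_subset_Ico_right htT
  have hsub' : Ico 0 t ⊆ Ico 0 T := Ico_subset_Icc_self.trans hsub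
  have hfc : ContinuousOn f (Icc 0 t) := hlip.continuousOn.mono hsub
  have hrc : ContinuousOn r (Icc 0 t) := fun x hx =>
    (hr x (hsub hx)).continuousAt.continuousWithinAt
  obtain ⟨M, hM⟩ := isCompact_Icc.bddAbove_image ((hrc.add hfc).sub continuousOn_const)
  refine solution_le_of_limsup_slope_right_ge (F := fun _ y => y * (y - ρ)) (K := M) hfc ?_ hrc
    (fun x hx => (hr x (hsub' hx)).hasDerivWithinAt) ?_ h0 ⟨ht0, le_rfl⟩
  · intro x hx s hs
    have hlim := hdini x (hsub' hx)
    rw [liminf_slope_nhdsGT_eq] at hlim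
    exact (eventually_lt_of_lt_liminf (hs.trans_le hlim)
      (hlip.isBoundedUnder_ge_slope (hsub' hx) (Ico_mem_nhdsGT_of_mem (hsub' hx)))).frequently
  · intro x hx hfr
    have hMx : r x + f x - ρ ≤ M := hM ⟨x, Ico_subset_Icc_self hx, rfl⟩
    calc r x * (r x - ρ) - f x * (f x - ρ) = (r x + f x - ρ) * (r x - f x) := by ring
      _ ≤ M * (r x - f x) := mul_le_mul_of_nonneg_right hMx (sub_nonneg.2 hfr.le)

/-- ODE comparison principle: if the lower Dini derivative of a locally Lipschitz
function `f` on `[0,T)` is at least `f(f − ρ)` everywhere, and `r` solves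
`r' = r(r − ρ)` with `r(0) ≤ f(0)`, then `r ≤ f` on `[0,T)`. -/
theorem dini_ode_comparison (T ρ : ℝ) (hT : 0 < T)
    (f r : ℝ → ℝ)
    (hlip : LocallyLipschitzOn (Set.Ico 0 T) f)
    (hdini : ∀ t ∈ Set.Ico (0:ℝ) T,
      f t * (f t - ρ) ≤
        Filter.liminf (fun h : ℝ => (f (t + h) - f t) / h)
          (nhdsWithin 0 (Set.Ioi 0)))
    (hr : ∀ t ∈ Set.Ico (0:ℝ) T, HasDerivAt r (r t * (r t - ρ)) t)
    (h0 : r 0 ≤ f 0) :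
    ∀ t ∈ Set.Ico (0:ℝ) T, r t ≤ f t :=
  dini_ode_comparison_general T ρ f r hlip hdini hr h0
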